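/- The recursion $\frac{q_j+1}{j}\cdot\frac{1}{D_j} = \frac{1}{j} + \frac{q_j}{j+1}\cdot\frac{1}{D_{j+1}}$ with $q_j = \min\{M-1, K-j\}$ and $D_K = 1$, when $M \ge K - j_0 + 1$ for all $j \ge j_0$ (so that $q_j = K-j$), yields $D_{j_0} = \frac{K-j_0+1}{j_0}\cdot\frac{1}{\sum_{i=j_0}^K 1/i}$, i.e., the general recursion of Theorem 4 reduces to the closed form of Theorem 1 when the antenna condition holds. -/

import Mathlib

/-!
Since `M ≥ K - j₀ + 1` we have `q_j = K - j`, and then `y_j = (K - j + 1) / j * (1 / D_j)`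
satisfies `y_j = 1 / j + y_{j+1}` and `y_K = 1 / K`, so `y_{j₀}` telescopes to the harmonic tail `∑_{i=j₀}^K 1 / i`.
-/

open Finset

theorem eq_sum_Icc_of_eq_add_succ {M : Type*} [AddCommMonoid M] {f y : ℕ → M} {a K : ℕ}
    (hK : y K = f K) (hstep : ∀ j, a ≤ j → j < K → y j = f j + y (j + 1)) {j : ℕ}
    (haj : a ≤ j) (hjK : j ≤ K) : y j = ∑ i ∈ Icc j K, f i := by
  induction hjK using Nat.decreasingInduction with
  | self => rw [Icc_self, sum_singleton, hK]
  | of_succ k hk ih =>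
    rw [hstep k haj hk, ih (by omega), Icc_add_one_left_eq_Ioc, add_sum_Ioc_eq_sum_Icc hk.le]

theorem stmt_16_general (M K j₀ : ℕ) (hj₀ : 1 ≤ j₀) (hjK : j₀ ≤ K) (hM : K - j₀ + 1 ≤ M)
    (D : ℕ → ℚ)
    (hDK : D K = 1)
    (hrec : ∀ j, j₀ ≤ j → j ≤ K - 1 →
      ((min (M - 1) (K - j) : ℕ) + 1 : ℚ) / j * (1 / D j) =
        1 / (j : ℚ) + ((min (M - 1) (K - j) : ℕ) : ℚ) / (j + 1) * (1 / D (j + 1))) :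
    D j₀ = ((K : ℚ) - j₀ + 1) / j₀ * (1 / ∑ i ∈ Finset.Icc j₀ K, 1 / (i : ℚ)) := by
  have hstep : ∀ j, j₀ ≤ j → j < K →
      ((K : ℚ) - j + 1) / j * (1 / D j) =
        1 / (j : ℚ) + ((K : ℚ) - (j + 1 : ℕ) + 1) / (j + 1 : ℕ) * (1 / D (j + 1)) := by
    intro j hj hjlt
    have hmin : min (M - 1) (K - j) = K - j := by omega
    have h := hrec j hj (by omega)
    rw [hmin, Nat.cast_sub hjlt.le] at h
    rw [h]
    push_cast
    ring
  have hsum : ((K : ℚ) - j₀ + 1) / j₀ * (1 / D j₀) = ∑ i ∈ Icc j₀ K, 1 / (i : ℚ) :=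
    eq_sum_Icc_of_eq_add_succ (by simp [hDK]) hstep le_rfl hjK
  have hc : ((K : ℚ) - j₀ + 1) / j₀ ≠ 0 := by
    have : (j₀ : ℚ) ≤ K := by exact_mod_cast hjK
    have : (1 : ℚ) ≤ j₀ := by exact_mod_cast hj₀
    exact div_ne_zero (by linarith) (by linarith)
  rw [← hsum, mul_one_div, div_mul_cancel_left₀ hc, one_div, inv_inv]

theorem stmt_16 (M K j₀ : ℕ) (hj₀ : 1 ≤ j₀) (hjK : j₀ ≤ K) (hM : K - j₀ + 1 ≤ M)
    (D : ℕ → ℚ)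
    (hpos : ∀ j, j₀ ≤ j → j ≤ K → 0 < D j)
    (hDK : D K = 1)
    (hrec : ∀ j, j₀ ≤ j → j ≤ K - 1 →
      ((min (M - 1) (K - j) : ℕ) + 1 : ℚ) / j * (1 / D j) =
        1 / (j : ℚ) + ((min (M - 1) (K - j) : ℕ) : ℚ) / (j + 1) * (1 / D (j + 1))) :
    D j₀ = ((K : ℚ) - j₀ + 1) / j₀ * (1 / ∑ i ∈ Finset.Icc j₀ K, 1 / (i : ℚ)) :=
  stmt_16_general M K j₀ hj₀ hjK hM D hDK hrec
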